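/- arXiv:1910.10571 — 3 statements merged into one kernel-verified Lean document; each statement's English description precedes it below -/
import Mathlib

section
/- Let m ≥ 1 be an integer, 2 ≤ q ≤ k reals, A ∈ ℝ^{n×m}, g ∈ ℝ^m, r ∈ ℝ^m with nonnegative entries, and ν > 0, β ≥ 1 reals. Suppose Δ̃ ∈ ℝ^m satisfies AΔ̃ = 0, g^⊤Δ̃ = ν/2, and ∑_e r_e Δ̃_e² + (1/2)(ν/m)^{1−q/k}‖Δ̃‖_q^q ≤ βν. Set α = (1/(16β))·m^{−(k/(k−1))(1/q−1/k)}. Then res_k(αΔ̃) ≥ αν/4; consequently, if res_k(Δ) ≤ ν for every Δ with AΔ = 0, then res_k(αΔ̃) ≥ (1/(64β))·m^{−(k/(k−1))(1/q−1/k)}·res_k(Δ) for every Δ with AΔ = 0. -/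
/-!
Scaling gives `res_k(αΔ̃) = αν/2 − 2α² ∑ r_e Δ̃_e² − α^k ‖Δ̃‖_k^k`. Since `α ≤ 1/(16β)` and
`∑ r_e Δ̃_e² ≤ βν`, the quadratic term is at most `αν/8`. For the last term,
`‖Δ̃‖_k^k ≤ (‖Δ̃‖_q^q)^{k/q}`, and the hypothesis bounds `‖Δ̃‖_q^q` by `2β ν^{q/k} m^{1−q/k}`.
The power of `m` in `α` is chosen so that `α^{k−1}` cancels the resulting factor `m^{k/q−1}`
exactly, leaving `α^{k−1} ‖Δ̃‖_k^k ≤ (16β)^{1−k} (2β)^{k/q} ν ≤ ν/8`.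
-/

/-- The residual objective `res_p(Δ) = g^⊤Δ − 2∑_e r_e Δ_e² − ‖Δ‖_p^p`. -/
noncomputable def res {m : ℕ} (g r : Fin m → ℝ) (p : ℝ) (Δ : Fin m → ℝ) : ℝ :=
  (∑ e, g e * Δ e) - 2 * (∑ e, r e * Δ e ^ 2) - ∑ e, |Δ e| ^ p

open Finset

lemma Finset.sum_rpow_le_rpow_sum {ι : Type*} (s : Finset ι) {f : ι → ℝ}
    (hf : ∀ i ∈ s, 0 ≤ f i) {p : ℝ} (hp : 1 ≤ p) :
    ∑ i ∈ s, f i ^ p ≤ (∑ i ∈ s, f i) ^ p := by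
  have hsplit : ∀ x : ℝ, 0 ≤ x → x ^ p = x * x ^ (p - 1) := fun x hx => by
    rw [← Real.rpow_one_add' hx (by linarith), add_sub_cancel]
  calc ∑ i ∈ s, f i ^ p = ∑ i ∈ s, f i * f i ^ (p - 1) :=
        sum_congr rfl fun i hi => hsplit _ (hf i hi)
    _ ≤ ∑ i ∈ s, f i * (∑ j ∈ s, f j) ^ (p - 1) := by
        refine sum_le_sum fun i hi => mul_le_mul_of_nonneg_left ?_ (hf i hi)
        exact Real.rpow_le_rpow (hf i hi) (single_le_sum hf hi) (by linarith)
    _ = (∑ i ∈ s, f i) ^ p := by rw [← sum_mul, hsplit _ (sum_nonneg hf)]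

lemma sum_abs_rpow_le_rpow_sum_abs_rpow {ι : Type*} [Fintype ι] (x : ι → ℝ) {q k : ℝ}
    (hq : 0 < q) (hqk : q ≤ k) :
    ∑ i, |x i| ^ k ≤ (∑ i, |x i| ^ q) ^ (k / q) := by
  calc ∑ i, |x i| ^ k = ∑ i, (|x i| ^ q) ^ (k / q) := by
        refine sum_congr rfl fun i _ => ?_
        rw [← Real.rpow_mul (abs_nonneg _), mul_div_cancel₀ _ hq.ne']
    _ ≤ (∑ i, |x i| ^ q) ^ (k / q) :=
        sum_rpow_le_rpow_sum _ (fun i _ => by positivity) ((one_le_div hq).mpr hqk)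

lemma rpow_sub_one_mul_rpow_le_of_mul_le {a s C t : ℝ} (ha : 0 ≤ a) (hs : 0 ≤ s)
    (ht : 0 < t) (h : a ^ (1 - 1 / t) * s ≤ C) : a ^ (t - 1) * s ^ t ≤ C ^ t := by
  calc a ^ (t - 1) * s ^ t = (a ^ (1 - 1 / t) * s) ^ t := by
        rw [Real.mul_rpow (by positivity) hs, ← Real.rpow_mul ha]
        congr 2
        field_simp
    _ ≤ C ^ t := by gcongr

lemma res_const_mul {m : ℕ} (g r : Fin m → ℝ) (p : ℝ) {a : ℝ} (ha : 0 ≤ a) (Δ : Fin m → ℝ) :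
    res g r p (fun e => a * Δ e) =
      a * ∑ e, g e * Δ e - 2 * a ^ 2 * ∑ e, r e * Δ e ^ 2 - a ^ p * ∑ e, |Δ e| ^ p := by
  simp only [res, mul_sum, abs_mul, abs_of_nonneg ha, Real.mul_rpow ha (abs_nonneg _)]
  congr 2 <;> refine sum_congr rfl fun e _ => by ring

lemma le_res_const_mul {m : ℕ} (g r Δ : Fin m → ℝ) {p a ν : ℝ} (ha : 0 < a)
    (hg : ∑ e, g e * Δ e = ν / 2) (hquad : a * ∑ e, r e * Δ e ^ 2 ≤ ν / 16)
    (hpow : a ^ (p - 1) * ∑ e, |Δ e| ^ p ≤ ν / 8) :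
    a * ν / 4 ≤ res g r p (fun e => a * Δ e) := by
  have hap : a ^ p = a * a ^ (p - 1) := by
    rw [Real.rpow_sub_one ha.ne', mul_div_cancel₀ _ ha.ne']
  rw [res_const_mul g r p ha.le, hg, hap]
  nlinarith [mul_le_mul_of_nonneg_left hquad ha.le, mul_le_mul_of_nonneg_left hpow ha.le]

lemma mul_rpow_neg_mul_rpow_sub_one {c M q k : ℝ} (hc : 0 ≤ c) (hM : 0 < M) (hq : q ≠ 0)
    (hk : k ≠ 0) (hk1 : k - 1 ≠ 0) :
    (c * M ^ (-(k / (k - 1)) * (1 / q - 1 / k))) ^ (k - 1) = c ^ (k - 1) / M ^ (k / q - 1) := by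
  have hexp : -(k / (k - 1)) * (1 / q - 1 / k) * (k - 1) = -(k / q - 1) := by
    field_simp
  rw [Real.mul_rpow hc (by positivity), ← Real.rpow_mul hM.le, hexp, Real.rpow_neg hM.le,
    ← div_eq_mul_inv]

lemma one_div_rpow_sub_one_mul_rpow_le {β q k : ℝ} (hβ : 1 ≤ β) (hq : 2 ≤ q) (hqk : q ≤ k) :
    (1 / (16 * β)) ^ (k - 1) * (2 * β) ^ (k / q) ≤ 1 / 8 := by
  have hkq : k / q ≤ k - 1 := by
    rw [div_le_iff₀ (by linarith)]
    nlinarith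
  calc (1 / (16 * β)) ^ (k - 1) * (2 * β) ^ (k / q)
      ≤ (1 / (16 * β)) ^ (k - 1) * (2 * β) ^ (k - 1) := by
        gcongr
        linarith
    _ = (1 / 8) ^ (k - 1) := by
        rw [← Real.mul_rpow (by positivity) (by positivity)]
        congr 1
        field_simp
        ring
    _ ≤ (1 / 8) ^ (1 : ℝ) :=
        Real.rpow_le_rpow_of_exponent_ge (by norm_num) (by norm_num) (by linarith)
    _ = 1 / 8 := Real.rpow_one _

lemma rpow_mul_sum_abs_rpow_le {ι : Type*} [Fintype ι] (x : ι → ℝ) {q k β ν M : ℝ}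
    (hq : 2 ≤ q) (hqk : q ≤ k) (hβ : 1 ≤ β) (hν : 0 < ν) (hM : 0 < M)
    (h : (ν / M) ^ (1 - q / k) * ∑ i, |x i| ^ q ≤ 2 * β * ν) :
    (1 / (16 * β) * M ^ (-(k / (k - 1)) * (1 / q - 1 / k))) ^ (k - 1) * ∑ i, |x i| ^ k
      ≤ ν / 8 := by
  set t := k / q
  set Tq := ∑ i, |x i| ^ q
  have hq0 : 0 < q := by linarith
  have hk0 : 0 < k := by linarith
  have hTq : (ν / M) ^ (t - 1) * Tq ^ t ≤ (2 * β * ν) ^ t :=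
    rpow_sub_one_mul_rpow_le_of_mul_le (by positivity) (by positivity) (by positivity)
      (by rwa [one_div_div])
  have hTq_div : Tq ^ t / M ^ (t - 1) ≤ (2 * β) ^ t * ν := by
    refine le_of_mul_le_mul_left ?_ (Real.rpow_pos_of_pos hν (t - 1))
    calc ν ^ (t - 1) * (Tq ^ t / M ^ (t - 1)) = (ν / M) ^ (t - 1) * Tq ^ t := by
          rw [Real.div_rpow hν.le hM.le]
          ring
      _ ≤ (2 * β * ν) ^ t := hTq
      _ = ν ^ (t - 1) * ((2 * β) ^ t * ν) := by
          rw [Real.mul_rpow (by positivity) hν.le, Real.rpow_sub_one hν.ne']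
          field_simp
  calc (1 / (16 * β) * M ^ (-(k / (k - 1)) * (1 / q - 1 / k))) ^ (k - 1) * ∑ i, |x i| ^ k
      = (1 / (16 * β)) ^ (k - 1) * ((∑ i, |x i| ^ k) / M ^ (t - 1)) := by
        rw [mul_rpow_neg_mul_rpow_sub_one (by positivity) hM hq0.ne' hk0.ne'
          (by linarith)]
        ring
    _ ≤ (1 / (16 * β)) ^ (k - 1) * ((2 * β) ^ t * ν) := by
        gcongr
        calc (∑ i, |x i| ^ k) / M ^ (t - 1) ≤ Tq ^ t / M ^ (t - 1) := by
              gcongr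
              exact sum_abs_rpow_le_rpow_sum_abs_rpow x hq0 hqk
          _ ≤ (2 * β) ^ t * ν := hTq_div
    _ = (1 / (16 * β)) ^ (k - 1) * (2 * β) ^ t * ν := by ring
    _ ≤ 1 / 8 * ν := by gcongr; exact one_div_rpow_sub_one_mul_rpow_le hβ hq hqk
    _ = ν / 8 := by ring

theorem stmt_1_general {n m : ℕ} (hm : 1 ≤ m) {q k : ℝ} (hq : 2 ≤ q) (hqk : q ≤ k)
    (A : Matrix (Fin n) (Fin m) ℝ) (g r Δt : Fin m → ℝ) (hr : ∀ e, 0 ≤ r e)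
    {ν β α : ℝ} (hν : 0 < ν) (hβ : 1 ≤ β)
    (hα : α = 1 / (16 * β) * (m : ℝ) ^ (-(k / (k - 1)) * (1 / q - 1 / k)))
    (hgΔ : (∑ e, g e * Δt e) = ν / 2)
    (hΔ : (∑ e, r e * Δt e ^ 2) + 1 / 2 * ((ν / (m : ℝ)) ^ (1 - q / k)) * (∑ e, |Δt e| ^ q)
        ≤ β * ν) :
    res g r k (fun e => α * Δt e) ≥ α * ν / 4 ∧
      ((∀ Δ, A.mulVec Δ = 0 → res g r k Δ ≤ ν) →
        ∀ Δ, A.mulVec Δ = 0 →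
          res g r k (fun e => α * Δt e)
            ≥ 1 / (64 * β) * (m : ℝ) ^ (-(k / (k - 1)) * (1 / q - 1 / k)) * res g r k Δ) := by
  have hm1 : (1 : ℝ) ≤ m := by exact_mod_cast hm
  have hmE : (m : ℝ) ^ (-(k / (k - 1)) * (1 / q - 1 / k)) ≤ 1 := by
    refine Real.rpow_le_one_of_one_le_of_nonpos hm1 (mul_nonpos_of_nonpos_of_nonneg ?_ ?_)
    · exact neg_nonpos.mpr (div_nonneg (by linarith) (by linarith))
    · exact sub_nonneg.mpr (one_div_le_one_div_of_le (by linarith) hqk)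
  have hα0 : 0 < α := by rw [hα]; positivity
  have hαβ : α ≤ 1 / (16 * β) := by rw [hα]; exact mul_le_of_le_one_right (by positivity) hmE
  have hS0 : 0 ≤ ∑ e, r e * Δt e ^ 2 := sum_nonneg fun e _ => mul_nonneg (hr e) (sq_nonneg _)
  have hweighted : 0 ≤ (ν / (m : ℝ)) ^ (1 - q / k) * ∑ e, |Δt e| ^ q := by positivity
  have hquad : α * ∑ e, r e * Δt e ^ 2 ≤ ν / 16 :=
    calc α * ∑ e, r e * Δt e ^ 2 ≤ 1 / (16 * β) * (β * ν) :=
          mul_le_mul hαβ (by linarith) hS0 (by positivity)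
      _ = ν / 16 := by field_simp
  have hpow : α ^ (k - 1) * ∑ e, |Δt e| ^ k ≤ ν / 8 := by
    rw [hα]
    exact rpow_mul_sum_abs_rpow_le Δt hq hqk hβ hν (by linarith) (by linarith)
  have hmain := le_res_const_mul g r Δt hα0 hgΔ hquad hpow
  refine ⟨hmain, fun hbound Δ hΔ0 => ?_⟩
  calc 1 / (64 * β) * (m : ℝ) ^ (-(k / (k - 1)) * (1 / q - 1 / k)) * res g r k Δ
      ≤ 1 / (64 * β) * (m : ℝ) ^ (-(k / (k - 1)) * (1 / q - 1 / k)) * ν := by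
        gcongr
        exact hbound Δ hΔ0
    _ = α * ν / 4 := by rw [hα]; ring
    _ ≤ res g r k (fun e => α * Δt e) := hmain

/-- Corollary 3.2, ApproxToRes, case `q ≤ k`. -/
theorem stmt_1 {n m : ℕ} (hm : 1 ≤ m) {q k : ℝ} (hq : 2 ≤ q) (hqk : q ≤ k)
    (A : Matrix (Fin n) (Fin m) ℝ) (g r Δt : Fin m → ℝ) (hr : ∀ e, 0 ≤ r e)
    {ν β α : ℝ} (hν : 0 < ν) (hβ : 1 ≤ β)
    (hα : α = 1 / (16 * β) * (m : ℝ) ^ (-(k / (k - 1)) * (1 / q - 1 / k)))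
    (hAΔ : A.mulVec Δt = 0) (hgΔ : (∑ e, g e * Δt e) = ν / 2)
    (hΔ : (∑ e, r e * Δt e ^ 2) + 1 / 2 * ((ν / (m : ℝ)) ^ (1 - q / k)) * (∑ e, |Δt e| ^ q)
        ≤ β * ν) :
    res g r k (fun e => α * Δt e) ≥ α * ν / 4 ∧
      ((∀ Δ, A.mulVec Δ = 0 → res g r k Δ ≤ ν) →
        ∀ Δ, A.mulVec Δ = 0 →
          res g r k (fun e => α * Δt e)
            ≥ 1 / (64 * β) * (m : ℝ) ^ (-(k / (k - 1)) * (1 / q - 1 / k)) * res g r k Δ) :=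
  stmt_1_general hm hq hqk A g r Δt hr hν hβ hα hgΔ hΔ
end

section
/- Let p ≥ 2 be real, A ∈ ℝ^{n×m}, g ∈ ℝ^m, r ∈ ℝ^m with nonnegative entries, ν > 0, and α, β ≥ 1. Suppose Δ* maximizes res_p over {Δ : AΔ = 0} with res_p(Δ*) ∈ (ν/2, ν]. Then: (i) the ℓ_p-constrained problem max{g^⊤Δ − 2∑_e r_e Δ_e² : AΔ = 0, ‖Δ‖_p^p ≤ ν} has optimal value at least ν/2; and (ii) if Δ̃ satisfies AΔ̃ = 0, ‖Δ̃‖_p^p ≤ βν, and g^⊤Δ̃ − 2∑_e r_e Δ̃_e² is at least (1/α) times the optimal value of the ℓ_p-constrained problem, then Δ = (4αβ)^{−1/(p−1)}·Δ̃ satisfies res_p(Δ) ≥ res_p(Δ*) / (16(α^p β)^{1/(p−1)}). -/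
open Finset Filter Topology

noncomputable def lpObjective {m : ℕ} (g r : Fin m → ℝ) (Δ : Fin m → ℝ) : ℝ :=
  (∑ e, g e * Δ e) - 2 * (∑ e, r e * Δ e ^ 2)

def lpValues {n m : ℕ} (A : Matrix (Fin n) (Fin m) ℝ) (g r : Fin m → ℝ) (p ν : ℝ) : Set ℝ :=
  {y | ∃ Δ : Fin m → ℝ, A.mulVec Δ = 0 ∧ (∑ e, |Δ e| ^ p) ≤ ν ∧ y = lpObjective g r Δ}

theorem le_of_forall_mem_Ioo_mul_le {x y : ℝ} (h : ∀ t ∈ Set.Ioo (0 : ℝ) 1, t * x ≤ y) :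
    x ≤ y := by
  have hlim : Tendsto (fun t => t * x) (𝓝[<] 1) (𝓝 x) := by
    simpa using ((tendsto_id (x := 𝓝 (1 : ℝ))).mul_const x).mono_left nhdsWithin_le_nhds
  exact le_of_tendsto hlim (eventually_of_mem (Ioo_mem_nhdsLT zero_lt_one) h)

theorem Real.rpow_neg_one_div_sub_one_rpow {c p : ℝ} (hc : 0 < c) (hp : p ≠ 1) :
    (c ^ (-(1 / (p - 1)))) ^ p = c ^ (-(1 / (p - 1))) / c := by
  have hp1 : p - 1 ≠ 0 := sub_ne_zero.2 hp
  rw [← Real.rpow_mul hc.le, ← Real.rpow_sub_one hc.ne']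
  congr 1
  field_simp
  ring

theorem one_div_le_rpow_neg_div {p α β : ℝ} (hp : 2 ≤ p) (hα : 0 < α) (hβ : 0 < β) :
    1 / (16 * (α ^ p * β) ^ (1 / (p - 1))) ≤ (4 * α * β) ^ (-(1 / (p - 1))) / (4 * α) := by
  set s := 1 / (p - 1) with hs
  have hs1 : s ≤ 1 := by rw [hs, div_le_one (by linarith)]; linarith
  have hps : p * s = 1 + s := by
    have hp1 : p - 1 ≠ 0 := by linarith
    rw [hs]; field_simp; ring
  have h4s : (4 : ℝ) ^ s ≤ 4 := Real.rpow_le_self_of_one_le (by norm_num) hs1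
  rw [Real.rpow_neg (by positivity), ← one_div, div_div]
  apply one_div_le_one_div_of_le (by positivity)
  calc (4 * α * β) ^ s * (4 * α) = 4 ^ s * (4 * α * α ^ s * β ^ s) := by
        rw [Real.mul_rpow (by positivity) hβ.le, Real.mul_rpow (by norm_num) hα.le]; ring
    _ ≤ 4 * (4 * α * α ^ s * β ^ s) := by gcongr
    _ = 16 * (α ^ p * β) ^ s := by
        rw [Real.mul_rpow (by positivity) hβ.le, ← Real.rpow_mul hα.le, hps,
          Real.rpow_add hα, Real.rpow_one]
        ring

section Residual

variable {m : ℕ} {g r : Fin m → ℝ} {p : ℝ}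

theorem res_eq_lpObjective_sub (Δ : Fin m → ℝ) :
    res g r p Δ = lpObjective g r Δ - ∑ e, |Δ e| ^ p := rfl

theorem res_smul (Δ : Fin m → ℝ) {t : ℝ} (ht : 0 ≤ t) :
    res g r p (t • Δ) = t * (∑ e, g e * Δ e) - 2 * t ^ 2 * (∑ e, r e * Δ e ^ 2)
      - t ^ p * ∑ e, |Δ e| ^ p := by
  simp only [res, Pi.smul_apply, smul_eq_mul, abs_mul, abs_of_nonneg ht,
    Real.mul_rpow ht (abs_nonneg _), mul_pow, mul_sum]
  congr 2 <;> refine sum_congr rfl fun e _ => ?_ <;> ring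

theorem le_res_smul (hr : ∀ e, 0 ≤ r e) (Δ : Fin m → ℝ) {t : ℝ} (ht0 : 0 ≤ t) (ht1 : t ≤ 1) :
    t * lpObjective g r Δ - t ^ p * ∑ e, |Δ e| ^ p ≤ res g r p (t • Δ) := by
  have hQ : 0 ≤ ∑ e, r e * Δ e ^ 2 := sum_nonneg fun e _ => mul_nonneg (hr e) (sq_nonneg _)
  have ht2 : t ^ 2 ≤ t := pow_le_of_le_one ht0 ht1 two_ne_zero
  rw [res_smul Δ ht0, lpObjective]
  nlinarith [mul_le_mul_of_nonneg_right ht2 hQ]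

theorem sum_abs_rpow_le_res_of_forall_smul_le (hp : 2 ≤ p) (hr : ∀ e, 0 ≤ r e)
    {Δ : Fin m → ℝ} (hmax : ∀ t ∈ Set.Ioo (0 : ℝ) 1, res g r p (t • Δ) ≤ res g r p Δ) :
    ∑ e, |Δ e| ^ p ≤ res g r p Δ := by
  set L := ∑ e, g e * Δ e
  set Q := ∑ e, r e * Δ e ^ 2
  set P := ∑ e, |Δ e| ^ p
  have hQ : 0 ≤ Q := sum_nonneg fun e _ => mul_nonneg (hr e) (sq_nonneg _)
  have hP : 0 ≤ P := by positivity
  refine le_of_forall_mem_Ioo_mul_le fun t ht => ?_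
  have hle := hmax t ht
  rw [res_smul Δ ht.1.le] at hle
  have htp : t ^ p ≤ t ^ 2 := by
    rw [← Real.rpow_natCast]
    exact Real.rpow_le_rpow_of_exponent_ge ht.1 ht.2.le (by norm_num [hp])
  -- dividing by `1 - t > 0` leaves `res Δ = L - (2Q + P) ≥ t (2Q + P)`
  have hfactor : (1 - t) * ((1 + t) * (2 * Q + P)) ≤ (1 - t) * L := by
    rw [res] at hle
    nlinarith [mul_le_mul_of_nonneg_right htp hP]
  have hL : (1 + t) * (2 * Q + P) ≤ L := le_of_mul_le_mul_left hfactor (by linarith [ht.2])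
  rw [res]
  nlinarith [mul_nonneg ht.1.le hQ]

theorem le_res_rpow_smul (hp : 2 ≤ p) (hr : ∀ e, 0 ≤ r e) {c : ℝ} (hc : 1 ≤ c)
    (Δ : Fin m → ℝ) :
    c ^ (-(1 / (p - 1))) * (lpObjective g r Δ - (∑ e, |Δ e| ^ p) / c)
      ≤ res g r p (c ^ (-(1 / (p - 1))) • Δ) := by
  have hle := le_res_smul (g := g) (p := p) hr Δ
    (Real.rpow_nonneg (by linarith) (-(1 / (p - 1))))
    (Real.rpow_le_one_of_one_le_of_nonpos hc (neg_nonpos.2 (by bound)))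
  rw [Real.rpow_neg_one_div_sub_one_rpow (by linarith) (by linarith)] at hle
  linear_combination hle

theorem bddAbove_lpValues {n : ℕ} {A : Matrix (Fin n) (Fin m) ℝ} {M ν : ℝ}
    (hmax : ∀ Δ, A.mulVec Δ = 0 → res g r p Δ ≤ M) : BddAbove (lpValues A g r p ν) := by
  refine ⟨M + ν, ?_⟩
  rintro _ ⟨Δ, hA, hP, rfl⟩
  linarith [hmax Δ hA, res_eq_lpObjective_sub (g := g) (r := r) (p := p) Δ]

end Residual

theorem stmt_15_general {n m : ℕ} {p : ℝ} (hp : 2 ≤ p)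
    (A : Matrix (Fin n) (Fin m) ℝ) (g r : Fin m → ℝ) (hr : ∀ e, 0 ≤ r e)
    {ν α β : ℝ} (hα : 1 ≤ α) (hβ : 1 ≤ β)
    (Δs : Fin m → ℝ) (hAs : A.mulVec Δs = 0)
    (hmax : ∀ Δ, A.mulVec Δ = 0 → res g r p Δ ≤ res g r p Δs)
    (hlo : ν / 2 < res g r p Δs) (hhi : res g r p Δs ≤ ν) :
    ν / 2 ≤ sSup {y | ∃ Δ : Fin m → ℝ, A.mulVec Δ = 0 ∧ (∑ e, |Δ e| ^ p) ≤ ν ∧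
        y = (∑ e, g e * Δ e) - 2 * (∑ e, r e * Δ e ^ 2)} ∧
      ∀ Δt : Fin m → ℝ, A.mulVec Δt = 0 → (∑ e, |Δt e| ^ p) ≤ β * ν →
        1 / α * sSup {y | ∃ Δ : Fin m → ℝ, A.mulVec Δ = 0 ∧ (∑ e, |Δ e| ^ p) ≤ ν ∧
            y = (∑ e, g e * Δ e) - 2 * (∑ e, r e * Δ e ^ 2)}
          ≤ (∑ e, g e * Δt e) - 2 * (∑ e, r e * Δt e ^ 2) →
        res g r p (fun e => (4 * α * β) ^ (-(1 / (p - 1))) * Δt e)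
          ≥ res g r p Δs / (16 * (α ^ p * β) ^ (1 / (p - 1))) := by
  have hα0 : 0 < α := by linarith
  have hβ0 : 0 < β := by linarith
  have hPs : ∑ e, |Δs e| ^ p ≤ res g r p Δs :=
    sum_abs_rpow_le_res_of_forall_smul_le hp hr fun t _ =>
      hmax _ (by rw [Matrix.mulVec_smul, hAs, smul_zero])
  have hhalf : ν / 2 ≤ sSup (lpValues A g r p ν) := by
    have hle := le_csSup (bddAbove_lpValues hmax) ⟨Δs, hAs, hPs.trans hhi, rfl⟩
    have hP : 0 ≤ ∑ e, |Δs e| ^ p := by positivity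
    linarith [res_eq_lpObjective_sub (g := g) (r := r) (p := p) Δs]
  refine ⟨hhalf, fun Δt _ hPt hobj => ?_⟩
  set lam := (4 * α * β) ^ (-(1 / (p - 1)))
  have hobj' : ν / 2 / α ≤ lpObjective g r Δt := by
    calc ν / 2 / α = 1 / α * (ν / 2) := by ring
      _ ≤ _ := by gcongr; exact hhalf
      _ ≤ _ := hobj
  have hpen : (∑ e, |Δt e| ^ p) / (4 * α * β) ≤ ν / (4 * α) := by
    calc (∑ e, |Δt e| ^ p) / (4 * α * β) ≤ β * ν / (4 * α * β) := by gcongr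
      _ = ν / (4 * α) := by field_simp
  show res g r p Δs / (16 * (α ^ p * β) ^ (1 / (p - 1))) ≤ res g r p (lam • Δt)
  calc res g r p Δs / (16 * (α ^ p * β) ^ (1 / (p - 1)))
        ≤ ν * (1 / (16 * (α ^ p * β) ^ (1 / (p - 1)))) := by
          rw [mul_one_div]; gcongr
    _ ≤ ν * (lam / (4 * α)) :=
          mul_le_mul_of_nonneg_left (one_div_le_rpow_neg_div hp hα0 hβ0) (by linarith)
    _ = lam * (ν / 2 / α - ν / (4 * α)) := by field_simp; ring
    _ ≤ lam * (lpObjective g r Δt - (∑ e, |Δt e| ^ p) / (4 * α * β)) := by gcongr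
    _ ≤ res g r p (lam • Δt) := le_res_rpow_smul hp hr (by nlinarith) Δt

/-- Lemma 6.2, lpBox.  The optimal value of the ℓ_p-constrained
problem is formalized as the supremum of its objective values over feasible points. -/
theorem stmt_15 {n m : ℕ} {p : ℝ} (hp : 2 ≤ p)
    (A : Matrix (Fin n) (Fin m) ℝ) (g r : Fin m → ℝ) (hr : ∀ e, 0 ≤ r e)
    {ν α β : ℝ} (hν : 0 < ν) (hα : 1 ≤ α) (hβ : 1 ≤ β)
    (Δs : Fin m → ℝ) (hAs : A.mulVec Δs = 0)
    (hmax : ∀ Δ, A.mulVec Δ = 0 → res g r p Δ ≤ res g r p Δs)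
    (hlo : ν / 2 < res g r p Δs) (hhi : res g r p Δs ≤ ν) :
    ν / 2 ≤ sSup {y | ∃ Δ : Fin m → ℝ, A.mulVec Δ = 0 ∧ (∑ e, |Δ e| ^ p) ≤ ν ∧
        y = (∑ e, g e * Δ e) - 2 * (∑ e, r e * Δ e ^ 2)} ∧
      ∀ Δt : Fin m → ℝ, A.mulVec Δt = 0 → (∑ e, |Δt e| ^ p) ≤ β * ν →
        1 / α * sSup {y | ∃ Δ : Fin m → ℝ, A.mulVec Δ = 0 ∧ (∑ e, |Δ e| ^ p) ≤ ν ∧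
            y = (∑ e, g e * Δ e) - 2 * (∑ e, r e * Δ e ^ 2)}
          ≤ (∑ e, g e * Δt e) - 2 * (∑ e, r e * Δt e ^ 2) →
        res g r p (fun e => (4 * α * β) ^ (-(1 / (p - 1))) * Δt e)
          ≥ res g r p Δs / (16 * (α ^ p * β) ^ (1 / (p - 1))) :=
  stmt_15_general hp A g r hr hα hβ Δs hAs hmax hlo hhi
end

section
/- Let p ≥ 2 be real, A ∈ ℝ^{n×m}, g ∈ ℝ^m, r ∈ ℝ^m with nonnegative entries, ν > 0, and α, β ≥ 1. Suppose Δ* maximizes res_p over {Δ : AΔ = 0} with res_p(Δ*) ∈ (ν/2, ν]. If Δ̃ satisfies AΔ̃ = 0, ‖Δ̃‖_∞ ≤ β ν^{1/p}, and g^⊤Δ̃ − 2∑_e r_e Δ̃_e² is at least (1/α) times the optimal value of max{g^⊤Δ − 2∑_e r_e Δ_e² : AΔ = 0, ‖Δ‖_∞ ≤ ν^{1/p}}, then Δ = (4αβ^p m)^{−1/(p−1)}·Δ̃ satisfies res_p(Δ) ≥ res_p(Δ*) / (16(α^p β^p m)^{1/(p−1)}). -/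
open Finset

lemma three_quarters_rpow_le {p : ℝ} (hp : 2 ≤ p) : (3 / 4 : ℝ) ^ p ≤ 9 / 16 :=
  calc (3 / 4 : ℝ) ^ p ≤ (3 / 4 : ℝ) ^ (2 : ℝ) :=
        Real.rpow_le_rpow_of_exponent_ge (by norm_num) (by norm_num) hp
    _ = 9 / 16 := by norm_num

section Residual

variable {m : ℕ} (g r : Fin m → ℝ)

def quadObj (Δ : Fin m → ℝ) : ℝ :=
  (∑ e, g e * Δ e) - 2 * (∑ e, r e * Δ e ^ 2)

def boxValues {n : ℕ} (A : Matrix (Fin n) (Fin m) ℝ) (c : ℝ) : Set ℝ :=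
  {y | ∃ Δ : Fin m → ℝ, A.mulVec Δ = 0 ∧ (∀ e, |Δ e| ≤ c) ∧ y = quadObj g r Δ}

lemma res_eq_quadObj_sub (p : ℝ) (Δ : Fin m → ℝ) :
    res g r p Δ = quadObj g r Δ - ∑ e, |Δ e| ^ p := rfl

lemma res_le_quadObj (p : ℝ) (Δ : Fin m → ℝ) : res g r p Δ ≤ quadObj g r Δ := by
  rw [res_eq_quadObj_sub, sub_le_self_iff]
  exact sum_nonneg fun e _ => by positivity

variable {g r}

lemma mul_quadObj_le_quadObj_smul (hr : ∀ e, 0 ≤ r e) (Δ : Fin m → ℝ) {t : ℝ}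
    (ht₀ : 0 ≤ t) (ht₁ : t ≤ 1) : t * quadObj g r Δ ≤ quadObj g r (t • Δ) := by
  have hR : 0 ≤ ∑ e, r e * Δ e ^ 2 := sum_nonneg fun e _ => mul_nonneg (hr e) (sq_nonneg _)
  have hsmul : quadObj g r (t • Δ) = t * ∑ e, g e * Δ e - t ^ 2 * (2 * ∑ e, r e * Δ e ^ 2) := by
    simp only [quadObj, Pi.smul_apply, smul_eq_mul, mul_sum]
    congr 1 <;> refine sum_congr rfl fun e _ => by ring
  rw [hsmul, quadObj]
  nlinarith [mul_nonneg ht₀ (sub_nonneg.2 ht₁)]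

lemma sum_abs_smul_rpow (p : ℝ) (Δ : Fin m → ℝ) {t : ℝ} (ht : 0 ≤ t) :
    ∑ e, |(t • Δ) e| ^ p = t ^ p * ∑ e, |Δ e| ^ p := by
  rw [mul_sum]
  refine sum_congr rfl fun e _ => ?_
  rw [Pi.smul_apply, smul_eq_mul, abs_mul, abs_of_nonneg ht, Real.mul_rpow ht (abs_nonneg _)]

lemma mul_quadObj_sub_le_res_smul (hr : ∀ e, 0 ≤ r e) (p : ℝ) (Δ : Fin m → ℝ) {t : ℝ}
    (ht₀ : 0 ≤ t) (ht₁ : t ≤ 1) :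
    t * quadObj g r Δ - t ^ p * ∑ e, |Δ e| ^ p ≤ res g r p (t • Δ) := by
  rw [res_eq_quadObj_sub, sum_abs_smul_rpow p Δ ht₀]
  linarith [mul_quadObj_le_quadObj_smul (g := g) hr Δ ht₀ ht₁]

lemma sum_abs_rpow_le_of_res_le {p : ℝ} (hp : 2 ≤ p) (hr : ∀ e, 0 ≤ r e) {Δ : Fin m → ℝ}
    (hΔ : res g r p ((3 / 4 : ℝ) • Δ) ≤ res g r p Δ) :
    ∑ e, |Δ e| ^ p ≤ 4 / 3 * res g r p Δ := by
  have hpow := three_quarters_rpow_le hp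
  have hP : 0 ≤ ∑ e, |Δ e| ^ p := sum_nonneg fun e _ => by positivity
  have hcompare := (mul_quadObj_sub_le_res_smul (g := g) hr p Δ (t := 3 / 4) (by norm_num)
    (by norm_num)).trans hΔ
  rw [res_eq_quadObj_sub] at hcompare ⊢
  nlinarith [mul_le_mul_of_nonneg_right hpow hP]

lemma abs_smul_le_rpow_inv_of_sum_abs_rpow_le {p ν : ℝ} (hp : 2 ≤ p) (hν : 0 ≤ ν)
    {Δ : Fin m → ℝ} (hΔ : ∑ e, |Δ e| ^ p ≤ 4 / 3 * ν) (e : Fin m) :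
    |((3 / 4 : ℝ) • Δ) e| ≤ ν ^ (1 / p) := by
  have hpow := three_quarters_rpow_le hp
  have hentry : |Δ e| ^ p ≤ 4 / 3 * ν :=
    (single_le_sum (f := fun e => |Δ e| ^ p) (fun e _ => by positivity) (mem_univ e)).trans hΔ
  rw [one_div, Real.le_rpow_inv_iff_of_pos (abs_nonneg _) hν (by linarith), Pi.smul_apply,
    smul_eq_mul, abs_mul, Real.mul_rpow (abs_nonneg _) (abs_nonneg _), abs_of_pos (by norm_num)]
  nlinarith [mul_le_mul hpow hentry (by positivity) (by norm_num)]

lemma sum_abs_rpow_le_card_mul {p b : ℝ} (hp : 0 ≤ p) {Δ : Fin m → ℝ} (hΔ : ∀ e, |Δ e| ≤ b) :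
    ∑ e, |Δ e| ^ p ≤ m * b ^ p := by
  simpa using sum_le_card_nsmul univ (fun e => |Δ e| ^ p) (b ^ p)
    fun e _ => Real.rpow_le_rpow (abs_nonneg _) (hΔ e) hp

variable {n : ℕ} {A : Matrix (Fin n) (Fin m) ℝ} {c : ℝ}

lemma bddAbove_boxValues (hr : ∀ e, 0 ≤ r e) : BddAbove (boxValues g r A c) := by
  refine ⟨∑ e, |g e| * c, ?_⟩
  rintro y ⟨Δ, -, hΔ, rfl⟩
  have hR : 0 ≤ ∑ e, r e * Δ e ^ 2 := sum_nonneg fun e _ => mul_nonneg (hr e) (sq_nonneg _)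
  have hlin : ∑ e, g e * Δ e ≤ ∑ e, |g e| * c := sum_le_sum fun e _ =>
    calc g e * Δ e ≤ |g e| * |Δ e| := (le_abs_self _).trans (abs_mul _ _).le
      _ ≤ |g e| * c := mul_le_mul_of_nonneg_left (hΔ e) (abs_nonneg _)
  rw [quadObj]
  linarith

lemma quadObj_le_sSup_boxValues (hr : ∀ e, 0 ≤ r e) {Δ : Fin m → ℝ} (hA : A.mulVec Δ = 0)
    (hΔ : ∀ e, |Δ e| ≤ c) : quadObj g r Δ ≤ sSup (boxValues g r A c) :=
  le_csSup (bddAbove_boxValues hr) ⟨Δ, hA, hΔ, rfl⟩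

lemma three_quarters_mul_res_le_sSup_boxValues {p ν : ℝ} (hp : 2 ≤ p) (hr : ∀ e, 0 ≤ r e)
    (hν : 0 ≤ ν) {Δ : Fin m → ℝ} (hA : A.mulVec Δ = 0)
    (hmax : ∀ Δ', A.mulVec Δ' = 0 → res g r p Δ' ≤ res g r p Δ) (hres : res g r p Δ ≤ ν) :
    3 / 4 * res g r p Δ ≤ sSup (boxValues g r A (ν ^ (1 / p))) := by
  have hA' : A.mulVec ((3 / 4 : ℝ) • Δ) = 0 := by rw [Matrix.mulVec_smul, hA, smul_zero]
  have hpnorm := sum_abs_rpow_le_of_res_le hp hr (hmax _ hA')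
  calc 3 / 4 * res g r p Δ ≤ 3 / 4 * quadObj g r Δ := by linarith [res_le_quadObj g r p Δ]
    _ ≤ quadObj g r ((3 / 4 : ℝ) • Δ) :=
      mul_quadObj_le_quadObj_smul hr Δ (by norm_num) (by norm_num)
    _ ≤ sSup (boxValues g r A (ν ^ (1 / p))) := quadObj_le_sSup_boxValues hr hA'
      (abs_smul_le_rpow_inv_of_sum_abs_rpow_le hp hν (by linarith))

end Residual

lemma rpow_neg_inv_sub_one_rpow {M p : ℝ} (hM : 0 < M) (hp : p ≠ 1) :
    (M ^ (-(1 / (p - 1)))) ^ p = M ^ (-(1 / (p - 1))) / M := by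
  have hp' : p - 1 ≠ 0 := sub_ne_zero.2 hp
  rw [← Real.rpow_mul hM.le, ← Real.rpow_sub_one hM.ne']
  congr 1
  field_simp
  ring

lemma div_four_le_rpow_mul_rpow_neg {p α b k : ℝ} (hp : 2 ≤ p) (hα : 0 < α) (hb : 0 < b)
    (hk : 0 < k) :
    α / 4 ≤ (α ^ p * b * k) ^ (1 / (p - 1)) * (4 * α * b * k) ^ (-(1 / (p - 1))) := by
  have hp₁ : p - 1 ≠ 0 := by linarith
  have hratio : α ^ p * b * k / (4 * α * b * k) = α ^ (p - 1) / 4 := by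
    rw [Real.rpow_sub_one hα.ne']
    field_simp
  have hfour : (4 : ℝ) ^ (p - 1)⁻¹ ≤ 4 :=
    Real.rpow_le_self_of_one_le (by norm_num) (inv_le_one_of_one_le₀ (by linarith))
  rw [Real.rpow_neg (by positivity), ← div_eq_mul_inv, ← Real.div_rpow (by positivity)
    (by positivity), hratio, Real.div_rpow (by positivity) (by norm_num), one_div (p - 1),
    Real.rpow_rpow_inv hα.le hp₁]
  gcongr

lemma rpow_mul_sum_abs_rpow_le_s16 {m : ℕ} {p ν α β : ℝ} (hp : 2 ≤ p) (hν : 0 < ν) (hα : 0 < α)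
    (hβ : 0 < β) (hm : 0 < m) {Δ : Fin m → ℝ} (hΔ : ∀ e, |Δ e| ≤ β * ν ^ (1 / p)) :
    ((4 * α * β ^ p * m) ^ (-(1 / (p - 1)))) ^ p * ∑ e, |Δ e| ^ p ≤
      (4 * α * β ^ p * m) ^ (-(1 / (p - 1))) * ν / (4 * α) := by
  have hβν : (β * ν ^ (1 / p)) ^ p = β ^ p * ν := by
    rw [Real.mul_rpow hβ.le (by positivity), one_div, Real.rpow_inv_rpow hν.le (by linarith)]
  have hpnorm := sum_abs_rpow_le_card_mul (p := p) (by linarith) hΔ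
  rw [hβν] at hpnorm
  rw [rpow_neg_inv_sub_one_rpow (by positivity) (by linarith)]
  calc _ ≤ (4 * α * β ^ p * m) ^ (-(1 / (p - 1))) / (4 * α * β ^ p * m) * (m * (β ^ p * ν)) := by
        gcongr
    _ = _ := by field_simp

theorem stmt_16_general {n m : ℕ} {p : ℝ} (hp : 2 ≤ p)
    (A : Matrix (Fin n) (Fin m) ℝ) (g r : Fin m → ℝ) (hr : ∀ e, 0 ≤ r e)
    {ν α β : ℝ} (hν : 0 < ν) (hα : 1 ≤ α) (hβ : 1 ≤ β)
    (Δs : Fin m → ℝ) (hAs : A.mulVec Δs = 0)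
    (hmax : ∀ Δ, A.mulVec Δ = 0 → res g r p Δ ≤ res g r p Δs)
    (hlo : ν / 2 < res g r p Δs) (hhi : res g r p Δs ≤ ν)
    (Δt : Fin m → ℝ) (hbox : ∀ e, |Δt e| ≤ β * ν ^ (1 / p))
    (happrox : 1 / α * sSup {y | ∃ Δ : Fin m → ℝ, A.mulVec Δ = 0 ∧
          (∀ e, |Δ e| ≤ ν ^ (1 / p)) ∧
          y = (∑ e, g e * Δ e) - 2 * (∑ e, r e * Δ e ^ 2)}
        ≤ (∑ e, g e * Δt e) - 2 * (∑ e, r e * Δt e ^ 2)) :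
    res g r p (fun e => (4 * α * β ^ p * (m : ℝ)) ^ (-(1 / (p - 1))) * Δt e)
      ≥ res g r p Δs / (16 * (α ^ p * β ^ p * (m : ℝ)) ^ (1 / (p - 1))) := by
  set s := res g r p Δs
  set M := 4 * α * β ^ p * (m : ℝ)
  set lam := M ^ (-(1 / (p - 1)))
  have hs : 0 < s := by linarith
  have hm : 0 < m := by
    rcases Nat.eq_zero_or_pos m with rfl | hm
    · simp [s, res] at hs
    · exact hm
  have hβp : 1 ≤ β ^ p := Real.one_le_rpow hβ (by linarith)
  have hM : 1 ≤ M := by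
    have : (1 : ℝ) ≤ m := by exact_mod_cast hm
    simp only [M]; nlinarith [mul_le_mul hα hβp zero_le_one (by linarith)]
  have hlam₀ : 0 < lam := by positivity
  have hlam₁ : lam ≤ 1 :=
    Real.rpow_le_one_of_one_le_of_nonpos hM (neg_nonpos.2 (by bound))
  have hquad : 3 / 4 * s / α ≤ quadObj g r Δt := by
    rw [one_div, inv_mul_le_iff₀ (by linarith)] at happrox
    rw [div_le_iff₀' (by linarith)]
    exact (three_quarters_mul_res_le_sSup_boxValues hp hr hν.le hAs hmax hhi).trans happrox
  have hpower : lam ^ p * ∑ e, |Δt e| ^ p ≤ lam * s / (2 * α) :=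
    calc _ ≤ lam * (ν / 2) / (2 * α) :=
          (rpow_mul_sum_abs_rpow_le_s16 hp hν (by linarith) (by linarith) hm hbox).trans_eq (by ring)
      _ ≤ lam * s / (2 * α) := by gcongr
  have hconst : α / 4 ≤ (α ^ p * β ^ p * m) ^ (1 / (p - 1)) * lam :=
    div_four_le_rpow_mul_rpow_neg hp (by linarith) (by positivity) (by positivity)
  calc s / (16 * (α ^ p * β ^ p * m) ^ (1 / (p - 1))) ≤ lam * s / (4 * α) := by
        rw [div_le_div_iff₀ (by positivity) (by positivity)]
        nlinarith [mul_le_mul_of_nonneg_left hconst hs.le]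
    _ = lam * (3 / 4 * s / α) - lam * s / (2 * α) := by field_simp; ring
    _ ≤ lam * quadObj g r Δt - lam ^ p * ∑ e, |Δt e| ^ p := by gcongr
    _ ≤ res g r p (lam • Δt) := mul_quadObj_sub_le_res_smul hr p Δt hlam₀.le hlam₁

/-- Corollary 6.3.  The ℓ_∞ constraint `‖Δ‖_∞ ≤ c` is formalized
entrywise, and the optimal value of the box-constrained problem as a supremum. -/
theorem stmt_16 {n m : ℕ} {p : ℝ} (hp : 2 ≤ p)
    (A : Matrix (Fin n) (Fin m) ℝ) (g r : Fin m → ℝ) (hr : ∀ e, 0 ≤ r e)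
    {ν α β : ℝ} (hν : 0 < ν) (hα : 1 ≤ α) (hβ : 1 ≤ β)
    (Δs : Fin m → ℝ) (hAs : A.mulVec Δs = 0)
    (hmax : ∀ Δ, A.mulVec Δ = 0 → res g r p Δ ≤ res g r p Δs)
    (hlo : ν / 2 < res g r p Δs) (hhi : res g r p Δs ≤ ν)
    (Δt : Fin m → ℝ) (hAt : A.mulVec Δt = 0) (hbox : ∀ e, |Δt e| ≤ β * ν ^ (1 / p))
    (happrox : 1 / α * sSup {y | ∃ Δ : Fin m → ℝ, A.mulVec Δ = 0 ∧
          (∀ e, |Δ e| ≤ ν ^ (1 / p)) ∧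
          y = (∑ e, g e * Δ e) - 2 * (∑ e, r e * Δ e ^ 2)}
        ≤ (∑ e, g e * Δt e) - 2 * (∑ e, r e * Δt e ^ 2)) :
    res g r p (fun e => (4 * α * β ^ p * (m : ℝ)) ^ (-(1 / (p - 1))) * Δt e)
      ≥ res g r p Δs / (16 * (α ^ p * β ^ p * (m : ℝ)) ^ (1 / (p - 1))) :=
  stmt_16_general hp A g r hr hν hα hβ Δs hAs hmax hlo hhi Δt hbox happrox
end
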